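/- If Z ~ AbSLG(α,β), then E(Z²) = π²(70 + 49π²α² + 310π⁴αβ + 889π⁶β²)/(210 + 35π²α² + 98π⁴αβ + 155π⁶β²). -/

import Mathlib

open Real MeasureTheory Filter

noncomputable def C (α β : ℝ) : ℝ :=
  (210 + 35 * π ^ 2 * α ^ 2 + 98 * π ^ 4 * α * β + 155 * π ^ 6 * β ^ 2) / 105

noncomputable def g (z : ℝ) : ℝ := Real.exp (-z) / (1 + Real.exp (-z)) ^ 2

noncomputable def f (z α β : ℝ) : ℝ := ((1 - α * z - β * z ^ 3) ^ 2 + 1) / C α β * g z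
/-!
For `t > 0` the logistic density expands as `g t = ∑ₙ (-1)ⁿ⁺¹ n e^{-nt}`, so its Mellin transform
is a Dirichlet series: `∫₀^∞ tᵏ g t dt = k! η(k)`, with `η` the alternating zeta function.
Separating the even and odd terms of `ζ` gives `η(k) = (1 - 2¹⁻ᵏ) ζ(k)`, and Euler's evaluation
of `ζ(2m)` then yields `∫ z^{2m} g = (-1)^{m+1} (2^{2m} - 2) B_{2m} π^{2m}`, while the odd moments
vanish by symmetry. Expanding `z² ((1 - αz - βz³)² + 1)` reduces `E(Z²)` to the moments of order
`2, 4, 6, 8`.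
-/

open Set
open scoped Nat

section Symmetry

variable {E : Type*} [NormedAddCommGroup E] {f : ℝ → E}

theorem integrable_of_even (hf : ∀ x, f (-x) = f x) (h : IntegrableOn f (Ioi 0)) :
    Integrable f := by
  have h' : IntegrableOn f (Iio 0) := by
    simpa only [hf] using
      IntegrableOn.comp_neg_Iio (μ := volume) (c := 0) (f := f) (by rwa [neg_zero])
  rw [← integrableOn_univ, ← Iio_union_Ici (a := (0 : ℝ)), integrableOn_union,
    integrableOn_Ici_iff_integrableOn_Ioi]
  exact ⟨h', h⟩

theorem integral_eq_zero_of_odd [NormedSpace ℝ E] (hf : ∀ x, f (-x) = -f x) :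
    ∫ x, f x = 0 := by
  have h := integral_neg_eq_self f volume
  simp only [hf, integral_neg] at h
  have h2 : (2 : ℝ) • ∫ x, f x = 0 := by
    rw [two_smul]
    nth_rewrite 1 [← h]
    exact neg_add_cancel _
  exact (smul_eq_zero.mp h2).resolve_left two_ne_zero

end Symmetry

theorem g_neg (z : ℝ) : g (-z) = g z := by
  have h : exp z = (exp (-z))⁻¹ := by rw [exp_neg, inv_inv]
  rw [g, g, neg_neg, h]
  field_simp
  ring

theorem g_abs (z : ℝ) : g |z| = g z := by
  rcases abs_choice z with h | h <;> simp only [h, g_neg]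

theorem g_nonneg (z : ℝ) : 0 ≤ g z := by unfold g; positivity

theorem g_le_exp_neg (z : ℝ) : g z ≤ exp (-z) :=
  div_le_self (exp_nonneg _) (one_le_pow₀ (by linarith [exp_nonneg (-z)]))

@[fun_prop]
theorem continuous_g : Continuous g :=
  Continuous.div (by fun_prop) (by fun_prop) fun z => by positivity

theorem integrableOn_pow_mul_g_Ioi (k : ℕ) : IntegrableOn (fun t => t ^ k * g t) (Ioi 0) := by
  refine (GammaIntegral_convergent (s := k + 1) (by positivity)).mono' (by fun_prop) ?_
  filter_upwards [self_mem_ae_restrict measurableSet_Ioi] with t (ht : 0 < t)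
  rw [norm_of_nonneg (by have := g_nonneg t; positivity), add_sub_cancel_right, rpow_natCast,
    mul_comm (exp _)]
  exact mul_le_mul_of_nonneg_left (g_le_exp_neg t) (by positivity)

@[fun_prop]
theorem integrable_pow_mul_g (k : ℕ) : Integrable fun z => z ^ k * g z := by
  have habs : Integrable fun z => |z| ^ k * g z :=
    integrable_of_even (fun z => by rw [abs_neg, g_neg])
      ((integrableOn_pow_mul_g_Ioi k).congr_fun (fun t (ht : 0 < t) => by rw [abs_of_pos ht])
        measurableSet_Ioi)
  exact habs.mono (by fun_prop) (ae_of_all _ fun z => by simp)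

theorem hasSum_g {t : ℝ} (ht : 0 < t) :
    HasSum (fun n : ℕ => (-1) ^ (n + 1) * n * exp (-n * t)) (g t) := by
  have hr : ‖-exp (-t)‖ < 1 := by
    rw [norm_neg, norm_of_nonneg (exp_nonneg _), exp_lt_one_iff]
    linarith
  have hg : g t = -(-exp (-t) / (1 - -exp (-t)) ^ 2) := by unfold g; ring
  have hterm : (fun n : ℕ => -(n * (-exp (-t)) ^ n)) =
      fun n : ℕ => (-1) ^ (n + 1) * n * exp (-n * t) := by
    funext n
    rw [neg_pow, ← exp_nat_mul]
    ring_nf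
  simpa only [hterm, ← hg] using (hasSum_coe_mul_geometric_of_norm_lt_one hr).neg

theorem hasSum_setIntegral_pow_mul_g_Ioi {k : ℕ} (hk : 2 ≤ k) :
    HasSum (fun n : ℕ => k ! * ((-1) ^ (n + 1) / (n : ℝ) ^ k)) (∫ t in Ioi 0, t ^ k * g t) := by
  have hk0 : k ≠ 0 := by omega
  have hp (n : ℕ) : ((-1) ^ (n + 1) * n : ℂ) = 0 ∨ 0 < (n : ℝ) := by
    rcases n.eq_zero_or_pos with rfl | hn
    · simp
    · exact Or.inr (by exact_mod_cast hn)
  have hF (t : ℝ) (ht : t ∈ Ioi 0) :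
      HasSum (fun n : ℕ => ((-1) ^ (n + 1) * n : ℂ) * exp (-n * t)) (g t : ℂ) := by
    exact_mod_cast Complex.hasSum_ofReal.mpr (hasSum_g ht)
  have hsum : Summable fun n : ℕ => ‖((-1) ^ (n + 1) * n : ℂ)‖ / (n : ℝ) ^ ((k : ℂ) + 1).re := by
    refine (summable_one_div_nat_pow.mpr hk).congr fun n => ?_
    have hre : ((k : ℂ) + 1).re = ((k + 1 : ℕ) : ℝ) := by simp
    rw [hre, rpow_natCast, norm_mul, norm_pow, norm_neg, norm_one, one_pow, one_mul,
      Complex.norm_natCast, pow_succ]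
    rcases n.eq_zero_or_pos with rfl | hn
    · simp [hk0]
    · field_simp
  have hmellin : mellin (fun t => (g t : ℂ)) (k + 1) = ((∫ t in Ioi 0, t ^ k * g t : ℝ) : ℂ) := by
    rw [mellin, ← integral_complex_ofReal]
    refine setIntegral_congr_fun measurableSet_Ioi fun t _ => ?_
    simp [Complex.cpow_natCast]
  have hseries := hasSum_mellin hp (by simp; positivity) hF hsum
  rw [hmellin] at hseries
  refine Complex.hasSum_ofReal.mp (hseries.congr_fun fun n => ?_)
  rw [Complex.Gamma_nat_eq_factorial]
  rcases n.eq_zero_or_pos with rfl | hn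
  · simp [hk0]
  · have hcpow : (n : ℂ) ^ ((k : ℂ) + 1) = (n : ℂ) ^ (k + 1) := by
      exact_mod_cast Complex.cpow_natCast (n : ℂ) (k + 1)
    have : (n : ℂ) ≠ 0 := by exact_mod_cast hn.ne'
    push_cast
    rw [hcpow]
    field_simp
    ring

theorem hasSum_neg_one_pow_succ_div_nat_pow {k : ℕ} {A : ℝ}
    (h : HasSum (fun n : ℕ => 1 / (n : ℝ) ^ k) A) :
    HasSum (fun n : ℕ => (-1) ^ (n + 1) / (n : ℝ) ^ k) ((1 - 2 / 2 ^ k) * A) := by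
  have heven : HasSum (fun j : ℕ => 1 / ((2 * j : ℕ) : ℝ) ^ k) ((2 ^ k)⁻¹ * A) := by
    refine (h.mul_left (2 ^ k)⁻¹).congr_fun fun j => ?_
    push_cast
    rw [mul_pow]
    field_simp
  obtain ⟨B, hodd⟩ : Summable fun j : ℕ => 1 / ((2 * j + 1 : ℕ) : ℝ) ^ k :=
    h.summable.comp_injective fun i j hij => by simpa using hij
  have hB : B = A - (2 ^ k)⁻¹ * A := by
    linarith [(HasSum.even_add_odd (f := fun n : ℕ => 1 / (n : ℝ) ^ k) heven hodd).unique h]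
  have hsplit := HasSum.even_add_odd (f := fun n : ℕ => (-1) ^ (n + 1) / (n : ℝ) ^ k)
    (heven.neg.congr_fun fun j => ?_) (hodd.congr_fun fun j => ?_)
  · convert hsplit using 1
    rw [hB]
    ring
  · simp [pow_succ, pow_mul, neg_div]
  · simp [pow_succ, pow_mul]

theorem integral_pow_mul_g_of_even {k : ℕ} (hk : Even k) :
    ∫ z, z ^ k * g z = 2 * ∫ t in Ioi 0, t ^ k * g t := by
  simp only [← integral_comp_abs, hk.pow_abs, g_abs]

theorem integral_pow_mul_g_of_odd {k : ℕ} (hk : Odd k) : ∫ z, z ^ k * g z = 0 :=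
  integral_eq_zero_of_odd fun z => by rw [hk.neg_pow, g_neg, neg_mul]

theorem integral_pow_two_mul_mul_g_eq_bernoulli {m : ℕ} (hm : m ≠ 0) :
    ∫ z, z ^ (2 * m) * g z =
      (-1) ^ (m + 1) * (2 ^ (2 * m) - 2) * bernoulli (2 * m) * π ^ (2 * m) := by
  have heta := hasSum_neg_one_pow_succ_div_nat_pow (hasSum_zeta_nat hm)
  have hhalf := hasSum_setIntegral_pow_mul_g_Ioi (k := 2 * m) (by omega)
  rw [integral_pow_mul_g_of_even (even_two_mul m), hhalf.unique (heta.mul_left _)]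
  obtain ⟨j, rfl⟩ : ∃ j, m = j + 1 := ⟨m - 1, by omega⟩
  rw [show 2 * (j + 1) - 1 = 2 * j + 1 by omega]
  field_simp
  ring

theorem integral_sq_mul_g : ∫ z, z ^ 2 * g z = π ^ 2 / 3 := by
  rw [integral_pow_two_mul_mul_g_eq_bernoulli (m := 1) one_ne_zero,
    show bernoulli (2 * 1) = 1 / 6 by decide +kernel]
  norm_num
  ring

theorem integral_pow_four_mul_g : ∫ z, z ^ 4 * g z = 7 * π ^ 4 / 15 := by
  rw [integral_pow_two_mul_mul_g_eq_bernoulli (m := 2) two_ne_zero,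
    show bernoulli (2 * 2) = -1 / 30 by decide +kernel]
  norm_num
  ring

theorem integral_pow_six_mul_g : ∫ z, z ^ 6 * g z = 31 * π ^ 6 / 21 := by
  rw [integral_pow_two_mul_mul_g_eq_bernoulli (m := 3) three_ne_zero,
    show bernoulli (2 * 3) = 1 / 42 by decide +kernel]
  norm_num
  ring

theorem integral_pow_eight_mul_g : ∫ z, z ^ 8 * g z = 127 * π ^ 8 / 15 := by
  rw [integral_pow_two_mul_mul_g_eq_bernoulli (m := 4) four_ne_zero,
    show bernoulli (2 * 4) = -1 / 30 by decide +kernel]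
  norm_num
  ring

theorem C_pos (α β : ℝ) : 0 < C α β := by
  have := pi_pos
  unfold C
  nlinarith [sq_nonneg (5 * π * α + 7 * π ^ 3 * β), sq_nonneg (π ^ 3 * β)]

theorem stmt14 (α β : ℝ) :
    ∫ z : ℝ, z ^ 2 * f z α β =
      π ^ 2 * (70 + 49 * π ^ 2 * α ^ 2 + 310 * π ^ 4 * α * β + 889 * π ^ 6 * β ^ 2) /
        (210 + 35 * π ^ 2 * α ^ 2 + 98 * π ^ 4 * α * β + 155 * π ^ 6 * β ^ 2) := by
  have hexpand : (fun z => z ^ 2 * f z α β) = fun z => (C α β)⁻¹ *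
      (2 * (z ^ 2 * g z) - 2 * α * (z ^ 3 * g z) + α ^ 2 * (z ^ 4 * g z) - 2 * β * (z ^ 5 * g z)
        + 2 * α * β * (z ^ 6 * g z) + β ^ 2 * (z ^ 8 * g z)) := by
    funext z
    rw [f, div_eq_mul_inv]
    ring
  have hC := (C_pos α β).ne'
  rw [hexpand, integral_const_mul, integral_add, integral_add, integral_sub, integral_add,
    integral_sub]
  all_goals try fun_prop
  simp only [integral_const_mul, integral_sq_mul_g, integral_pow_four_mul_g,
    integral_pow_six_mul_g, integral_pow_eight_mul_g,
    integral_pow_mul_g_of_odd (show Odd 3 by decide), integral_pow_mul_g_of_odd (show Odd 5 by decide)]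
  rw [C] at hC ⊢
  field_simp
  ring
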